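/- With S = (s, t) ∈ ℝ^{2m×2} of full column rank, δ = (det(SᵀS))^{1/4}, and the optimal D̆⁻¹ = [[c̆⁻¹, −f̆],[0, c̆]] where c̆ = ‖s‖₂/δ and f̆ = (sᵀt)/(‖s‖₂δ), both columns of S D̆⁻¹ have Euclidean norm δ: ‖S D̆⁻¹ e₁‖₂ = ‖S D̆⁻¹ e₂‖₂ = δ. -/

import Mathlib

/-!
With `a = ‖s‖²`, `b = ⟪s, t⟫`, `c = ‖t‖²` the Gram determinant is `det (SᵀS) = ac - b² = δ⁴`.
The first column `c̆⁻¹ s` has norm `δ ‖s‖ / ‖s‖ = δ`, and the second one has squared norm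
`f̆² a - 2 f̆ c̆ b + c̆² c = (b² - 2b² + ac) / δ² = δ⁴ / δ² = δ²`.
-/

open Matrix

theorem Matrix.isHermitian_transpose_mul_self {α : Type*} {m n : Type*} [CommSemiring α] [StarRing α]
    [TrivialStar α] [Fintype m] (A : Matrix m n α) : (Aᵀ * A).IsHermitian := by
  rw [Matrix.IsHermitian, Matrix.conjTranspose_eq_transpose_of_trivial, Matrix.transpose_mul,
    Matrix.transpose_transpose]

noncomputable def enorm' {m : ℕ} (v : Fin m → ℝ) : ℝ := Real.sqrt (∑ i, v i ^ 2)

noncomputable def frob {m n : ℕ} (A : Matrix (Fin m) (Fin n) ℝ) : ℝ :=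
  Real.sqrt (∑ i, ∑ j, A i j ^ 2)

noncomputable def specNorm {m n : ℕ} (A : Matrix (Fin m) (Fin n) ℝ) : ℝ :=
  ‖(Matrix.toEuclideanLin A).toContinuousLinearMap‖

noncomputable def sigmaMax (B : Matrix (Fin 2) (Fin 2) ℝ) : ℝ :=
  Real.sqrt (max ((Matrix.isHermitian_transpose_mul_self B).eigenvalues 0)
                 ((Matrix.isHermitian_transpose_mul_self B).eigenvalues 1))

noncomputable def sigmaMin (B : Matrix (Fin 2) (Fin 2) ℝ) : ℝ :=
  Real.sqrt (min ((Matrix.isHermitian_transpose_mul_self B).eigenvalues 0)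
                 ((Matrix.isHermitian_transpose_mul_self B).eigenvalues 1))

open RealInnerProductSpace

section InnerProductSpace

variable {E : Type*} [NormedAddCommGroup E] [InnerProductSpace ℝ E]

theorem inner_sq_le_norm_sq_mul_norm_sq (s t : E) : ⟪s, t⟫ ^ 2 ≤ ‖s‖ ^ 2 * ‖t‖ ^ 2 := by
  obtain ⟨hlower, hupper⟩ := abs_le.mp (abs_real_inner_le_norm s t)
  rw [← mul_pow]
  exact sq_le_sq' hlower hupper

theorem norm_smul_add_smul_sq (x y : ℝ) (s t : E) :
    ‖x • s + y • t‖ ^ 2 = x ^ 2 * ‖s‖ ^ 2 + 2 * x * y * ⟪s, t⟫ + y ^ 2 * ‖t‖ ^ 2 := by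
  rw [norm_add_sq_real, norm_smul, norm_smul, real_inner_smul_left, real_inner_smul_right,
    mul_pow, mul_pow, Real.norm_eq_abs, Real.norm_eq_abs, sq_abs, sq_abs]
  ring

theorem norm_columns_of_optimal_scaling (s t : E) {δ cb fb : ℝ} (hδ0 : 0 ≤ δ)
    (hδ : δ ^ 4 = ‖s‖ ^ 2 * ‖t‖ ^ 2 - ⟪s, t⟫ ^ 2)
    (hcb : cb = ‖s‖ / δ) (hfb : fb = ⟪s, t⟫ / (‖s‖ * δ)) :
    ‖cb⁻¹ • s‖ = δ ∧ ‖(-fb) • s + cb • t‖ = δ := by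
  obtain rfl | hδpos := hδ0.eq_or_lt
  -- division by `δ = 0` makes `cb = fb = 0`, so both columns vanish
  · simp [hcb, hfb]
  have hs : ‖s‖ ≠ 0 := by
    intro hs
    rw [hs] at hδ
    nlinarith [pow_pos hδpos 4, sq_nonneg ⟪s, t⟫]
  subst hcb hfb
  constructor
  · rw [norm_smul, inv_div, Real.norm_of_nonneg (by positivity)]
    field_simp
  · rw [← sq_eq_sq₀ (norm_nonneg _) hδ0, norm_smul_add_smul_sq]
    calc _ = (‖s‖ ^ 2 * ‖t‖ ^ 2 - ⟪s, t⟫ ^ 2) / δ ^ 2 := by field_simp; ring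
      _ = δ ^ 2 := by rw [← hδ]; field_simp

end InnerProductSpace

theorem enorm'_eq_norm_toLp {n : ℕ} (v : Fin n → ℝ) :
    enorm' v = ‖(WithLp.toLp 2 v : EuclideanSpace ℝ (Fin n))‖ := by
  rw [EuclideanSpace.norm_eq, enorm']
  simp only [Real.norm_eq_abs, sq_abs]

theorem inner_toLp_eq_sum {n : ℕ} (v w : Fin n → ℝ) :
    ⟪(WithLp.toLp 2 v : EuclideanSpace ℝ (Fin n)), WithLp.toLp 2 w⟫ = ∑ i, v i * w i := by
  simp [PiLp.inner_apply, mul_comm]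

theorem det_transpose_mul_self_fin_two {n : ℕ} (S : Matrix (Fin n) (Fin 2) ℝ) :
    (Sᵀ * S).det = enorm' (fun i => S i 0) ^ 2 * enorm' (fun i => S i 1) ^ 2
      - (∑ i, S i 0 * S i 1) ^ 2 := by
  rw [enorm', enorm', Real.sq_sqrt (by positivity), Real.sq_sqrt (by positivity), det_fin_two]
  simp only [mul_apply, transpose_apply, sq, mul_comm (S _ 1) (S _ 0)]

theorem mul_apply_col_fin_two {n R : Type*} [CommSemiring R] (S : Matrix n (Fin 2) R)
    (M : Matrix (Fin 2) (Fin 2) R) (j : Fin 2) :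
    (fun i => (S * M) i j) = M 0 j • (fun i => S i 0) + M 1 j • (fun i => S i 1) := by
  ext i
  simp [mul_apply, Fin.sum_univ_two, mul_comm]

theorem columns_of_optimally_scaled_general {m : ℕ} (S : Matrix (Fin (2*m)) (Fin 2) ℝ)
    (δ cb fb : ℝ)
    (hδ : δ = Real.sqrt (Real.sqrt (Sᵀ * S).det))
    (hcb : cb = enorm' (fun i => S i 0) / δ)
    (hfb : fb = (∑ i, S i 0 * S i 1) / (enorm' (fun i => S i 0) * δ)) :
    enorm' (fun i => (S * (!![cb⁻¹, -fb; 0, cb] : Matrix (Fin 2) (Fin 2) ℝ)) i 0) = δ ∧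
    enorm' (fun i => (S * (!![cb⁻¹, -fb; 0, cb] : Matrix (Fin 2) (Fin 2) ℝ)) i 1) = δ := by
  set s : EuclideanSpace ℝ (Fin (2 * m)) := WithLp.toLp 2 (fun i => S i 0)
  set t : EuclideanSpace ℝ (Fin (2 * m)) := WithLp.toLp 2 (fun i => S i 1)
  have hgram : (Sᵀ * S).det = ‖s‖ ^ 2 * ‖t‖ ^ 2 - ⟪s, t⟫ ^ 2 := by
    rw [det_transpose_mul_self_fin_two, enorm'_eq_norm_toLp, enorm'_eq_norm_toLp,
      inner_toLp_eq_sum]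
  have hδ4 : δ ^ 4 = ‖s‖ ^ 2 * ‖t‖ ^ 2 - ⟪s, t⟫ ^ 2 := by
    rw [hδ, ← hgram, show 4 = 2 * 2 from rfl, pow_mul, Real.sq_sqrt (Real.sqrt_nonneg _),
      Real.sq_sqrt (hgram ▸ sub_nonneg.mpr (inner_sq_le_norm_sq_mul_norm_sq s t))]
  rw [enorm'_eq_norm_toLp] at hcb hfb
  rw [← inner_toLp_eq_sum] at hfb
  obtain ⟨hcol₀, hcol₁⟩ :=
    norm_columns_of_optimal_scaling s t (hδ ▸ Real.sqrt_nonneg _) hδ4 hcb hfb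
  rw [neg_smul] at hcol₁
  simpa only [enorm'_eq_norm_toLp, mul_apply_col_fin_two, WithLp.toLp_add, WithLp.toLp_smul,
    of_apply, cons_val', cons_val_zero, cons_val_fin_one, cons_val_one, zero_smul, add_zero,
    neg_smul] using ⟨hcol₀, hcol₁⟩

theorem columns_of_optimally_scaled {m : ℕ} (S : Matrix (Fin (2*m)) (Fin 2) ℝ)
    (hSI : LinearIndependent ℝ ![fun i => S i 0, fun i => S i 1])
    (δ cb fb : ℝ)
    (hδ : δ = Real.sqrt (Real.sqrt (Sᵀ * S).det))
    (hcb : cb = enorm' (fun i => S i 0) / δ)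
    (hfb : fb = (∑ i, S i 0 * S i 1) / (enorm' (fun i => S i 0) * δ)) :
    enorm' (fun i => (S * (!![cb⁻¹, -fb; 0, cb] : Matrix (Fin 2) (Fin 2) ℝ)) i 0) = δ ∧
    enorm' (fun i => (S * (!![cb⁻¹, -fb; 0, cb] : Matrix (Fin 2) (Fin 2) ℝ)) i 1) = δ :=
  columns_of_optimally_scaled_general S δ cb fb hδ hcb hfb
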